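/- Let (Ω, 𝓕, P) be a probability space and H ≥ 1. Let λ_1, …, λ_H, λ'_1, …, λ'_H be mutually independent real random variables with E[λ_h] = E[λ'_h] = ψ and E[λ_h²] = E[(λ'_h)²] = ψ(ψ+1) for all h, where ψ > 0, and let X_1, …, X_H be square-integrable real random variables such that (λ_1, …, λ_H, λ'_1, …, λ'_H) is independent of (X_1, …, X_H). Assume the X_h are identically distributed with variance V := Var(X_1) and Cov(X_h, X_k) = c_A for all h ≠ k, and assume V + c_A·(H−1) > 0 and E[X_1²] > 0. Then the correlation between Σ_{h=1}^H λ_h X_h and Σ_{h=1}^H λ'_h X_h equals ( 1 + E[X_1²] / ( (V + c_A·(H−1))·ψ ) )^{−1}. In particular this correlation is an increasing function of ψ. (This is equation (7) of the paper, the correlation between μ̃_j(A) and μ̃_ℓ(A) under i.i.d. Gamma(ψ, 1) scores; in the paper's notation the numerator of the correction term is the second moment of μ*_1(A).) -/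

import Mathlib

open MeasureTheory ProbabilityTheory

/-- Covariance of two real-valued random variables: `Cov(X, Y) = E[XY] - E[X]·E[Y]`. -/
noncomputable def cov {Ω : Type*} [MeasurableSpace Ω] (P : Measure Ω) (X Y : Ω → ℝ) : ℝ :=
  (∫ ω, X ω * Y ω ∂P) - (∫ ω, X ω ∂P) * (∫ ω, Y ω ∂P)

/-- Correlation of two real-valued random variables. -/
noncomputable def corr {Ω : Type*} [MeasurableSpace Ω] (P : Measure Ω) (X Y : Ω → ℝ) : ℝ :=
  cov P X Y / Real.sqrt (cov P X X * cov P Y Y)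

lemma memLp_mul_integrable {Ω : Type*} [MeasurableSpace Ω] {P : Measure Ω} {f g : Ω → ℝ}
    (hf : MemLp f 2 P) (hg : MemLp g 2 P) : Integrable (fun ω => f ω * g ω) P := by
  have h12 : (1:ENNReal)/1 = 1/2 + 1/2 := by
    rw [ENNReal.div_add_div_same, one_add_one_eq_two,
      ENNReal.div_self two_ne_zero ENNReal.ofNat_ne_top, div_one]
  exact memLp_one_iff_integrable.mp (hg.smul hf)

lemma double_sum_ite {H : ℕ} (a b : ℝ) :
    (∑ h : Fin H, ∑ k : Fin H, (if h = k then a else b)) = H * a + H * (H - 1) * b := by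
  have hrow : ∀ h : Fin H, (∑ k : Fin H, (if h = k then a else b)) = b * H + (a - b) := by
    intro h
    have hsplit : ∀ k : Fin H, (if h = k then a else b) = b + (if h = k then a - b else 0) := by
      intro k; split <;> ring
    simp_rw [hsplit, Finset.sum_add_distrib, Finset.sum_const, Finset.sum_ite_eq,
      Finset.mem_univ, if_true, Finset.card_univ, Fintype.card_fin, nsmul_eq_mul]
    ring
  simp_rw [hrow, Finset.sum_const, Finset.card_univ, Fintype.card_fin, nsmul_eq_mul]
  ring

/-- Equation (7) of the paper: under i.i.d. Gamma(ψ, 1) scores, the correlation between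
`Σ λ_h X_h` and `Σ λ'_h X_h` equals `(1 + E[X₁²]/((V + c_A (H−1)) ψ))⁻¹`. -/
theorem correlation_sum_gamma_scores
    {Ω : Type*} [MeasurableSpace Ω] (P : Measure Ω) [IsProbabilityMeasure P]
    (H : ℕ) (hH : 1 ≤ H)
    (lam lam' X : Fin H → Ω → ℝ)
    (hlam : ∀ h, MemLp (lam h) 2 P) (hlam' : ∀ h, MemLp (lam' h) 2 P)
    (hX : ∀ h, MemLp (X h) 2 P)
    -- the scores λ_1, …, λ_H, λ'_1, …, λ'_H are mutually independent
    (hlamIndep : iIndepFun (Sum.elim lam lam' :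
      Fin H ⊕ Fin H → Ω → ℝ) P)
    -- first two moments of a Gamma(ψ, 1) distribution, with ψ > 0
    (ψ : ℝ) (hψ : 0 < ψ)
    (hmean : ∀ h, (∫ ω, lam h ω ∂P) = ψ)
    (hmean' : ∀ h, (∫ ω, lam' h ω ∂P) = ψ)
    (hsecond : ∀ h, (∫ ω, (lam h ω) ^ 2 ∂P) = ψ * (ψ + 1))
    (hsecond' : ∀ h, (∫ ω, (lam' h ω) ^ 2 ∂P) = ψ * (ψ + 1))
    -- the scores are independent of the masses
    (hindep : IndepFun
      (fun ω => (((fun h => lam h ω), (fun h => lam' h ω)) : (Fin H → ℝ) × (Fin H → ℝ)))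
      (fun ω => ((fun h => X h ω) : Fin H → ℝ)) P)
    -- the masses are identically distributed
    (hid : ∀ h, IdentDistrib (X h) (X ⟨0, hH⟩) P P)
    (V cA : ℝ)
    (hV : cov P (X ⟨0, hH⟩) (X ⟨0, hH⟩) = V)
    (hcA : ∀ h k, h ≠ k → cov P (X h) (X k) = cA)
    (hpos : 0 < V + cA * (H - 1))
    (hm2pos : 0 < ∫ ω, (X ⟨0, hH⟩ ω) ^ 2 ∂P) :
    corr P (fun ω => ∑ h, lam h ω * X h ω) (fun ω => ∑ h, lam' h ω * X h ω) =
      (1 + (∫ ω, (X ⟨0, hH⟩ ω) ^ 2 ∂P) / ((V + cA * (H - 1)) * ψ))⁻¹ := by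
  set x0 : Fin H := ⟨0, hH⟩ with hx0
  set m : ℝ := ∫ ω, X x0 ω ∂P with hm
  set M2 : ℝ := ∫ ω, (X x0 ω) ^ 2 ∂P with hM2
  set D : ℝ := V + cA * (H - 1) with hDdef
  -- basic integrability
  have hsplitInt : ∀ {f g : Ω → ℝ}, IndepFun f g P → Integrable f P → Integrable g P →
      (∫ ω, f ω * g ω ∂P) = (∫ ω, f ω ∂P) * (∫ ω, g ω ∂P) :=
    fun h hf hg => h.integral_fun_mul_eq_mul_integral hf.aestronglyMeasurable hg.aestronglyMeasurable
  have hXint : ∀ h, Integrable (X h) P := fun h => (hX h).integrable one_le_two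
  have hlamint : ∀ h, Integrable (lam h) P := fun h => (hlam h).integrable one_le_two
  have hlamint' : ∀ h, Integrable (lam' h) P := fun h => (hlam' h).integrable one_le_two
  have hXX : ∀ h k : Fin H, Integrable (fun ω => X h ω * X k ω) P :=
    fun h k => memLp_mul_integrable (hX h) (hX k)
  -- independence helpers
  have hIndLX : ∀ (φ : (Fin H → ℝ) × (Fin H → ℝ) → ℝ) (χ : (Fin H → ℝ) → ℝ),
      Measurable φ → Measurable χ →
      IndepFun (fun ω => φ (fun h => lam h ω, fun h => lam' h ω))
        (fun ω => χ (fun h => X h ω)) P :=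
    fun φ χ hφ hχ => hindep.comp hφ hχ
  have mfst : ∀ h : Fin H, Measurable (fun p : (Fin H → ℝ) × (Fin H → ℝ) => p.1 h) :=
    fun h => (measurable_pi_apply h).comp measurable_fst
  have msnd : ∀ h : Fin H, Measurable (fun p : (Fin H → ℝ) × (Fin H → ℝ) => p.2 h) :=
    fun h => (measurable_pi_apply h).comp measurable_snd
  have mX : ∀ h k : Fin H, Measurable (fun q : Fin H → ℝ => q h * q k) :=
    fun h k => (measurable_pi_apply h).mul (measurable_pi_apply k)
  have I0 : ∀ h : Fin H, IndepFun (lam h) (X h) P :=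
    fun h => hIndLX (fun p => p.1 h) (fun q => q h) (mfst h) (measurable_pi_apply h)
  have I0' : ∀ h : Fin H, IndepFun (lam' h) (X h) P :=
    fun h => hIndLX (fun p => p.2 h) (fun q => q h) (msnd h) (measurable_pi_apply h)
  have I1 : ∀ h k : Fin H, IndepFun (fun ω => lam h ω * lam k ω) (fun ω => X h ω * X k ω) P :=
    fun h k => hIndLX (fun p => p.1 h * p.1 k) (fun q => q h * q k)
      ((mfst h).mul (mfst k)) (mX h k)
  have I2 : ∀ h k : Fin H, IndepFun (fun ω => lam h ω * lam' k ω) (fun ω => X h ω * X k ω) P :=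
    fun h k => hIndLX (fun p => p.1 h * p.2 k) (fun q => q h * q k)
      ((mfst h).mul (msnd k)) (mX h k)
  have I3 : ∀ h k : Fin H, IndepFun (fun ω => lam' h ω * lam' k ω) (fun ω => X h ω * X k ω) P :=
    fun h k => hIndLX (fun p => p.2 h * p.2 k) (fun q => q h * q k)
      ((msnd h).mul (msnd k)) (mX h k)
  -- score moment integrals
  have hLL : ∀ h k : Fin H, (∫ ω, lam h ω * lam k ω ∂P) = if h = k then ψ * (ψ + 1) else ψ * ψ := by
    intro h k
    by_cases hhk : h = k
    · subst hhk
      rw [if_pos rfl, ← hsecond h]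
      simp_rw [pow_two]
    · have hind : IndepFun (lam h) (lam k) P :=
        hlamIndep.indepFun (show (Sum.inl h : Fin H ⊕ Fin H) ≠ Sum.inl k by simpa using hhk)
      rw [if_neg hhk, hsplitInt hind (hlamint h) (hlamint k), hmean h, hmean k]
  have hL'L' : ∀ h k : Fin H,
      (∫ ω, lam' h ω * lam' k ω ∂P) = if h = k then ψ * (ψ + 1) else ψ * ψ := by
    intro h k
    by_cases hhk : h = k
    · subst hhk
      rw [if_pos rfl, ← hsecond' h]
      simp_rw [pow_two]
    · have hind : IndepFun (lam' h) (lam' k) P :=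
        hlamIndep.indepFun (show (Sum.inr h : Fin H ⊕ Fin H) ≠ Sum.inr k by simpa using hhk)
      rw [if_neg hhk, hsplitInt hind (hlamint' h) (hlamint' k), hmean' h, hmean' k]
  have hLL' : ∀ h k : Fin H, (∫ ω, lam h ω * lam' k ω ∂P) = ψ * ψ := by
    intro h k
    have hind : IndepFun (lam h) (lam' k) P :=
      hlamIndep.indepFun (show (Sum.inl h : Fin H ⊕ Fin H) ≠ Sum.inr k by simp)
    rw [hsplitInt hind (hlamint h) (hlamint' k), hmean h, hmean' k]
  -- mass moment integrals
  have hXm : ∀ h, (∫ ω, X h ω ∂P) = m := fun h => (hid h).integral_eq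
  have hXsq : ∀ h, (∫ ω, X h ω * X h ω ∂P) = M2 := by
    intro h
    simp_rw [← pow_two]
    exact ((hid h).comp (measurable_id.pow_const 2)).integral_eq
  have hVm : V = M2 - m * m := by
    rw [← hV]
    simp only [cov]
    rw [hXsq x0, hXm x0]
  have hFX : ∀ h k : Fin H, (∫ ω, X h ω * X k ω ∂P) = (if h = k then V else cA) + m * m := by
    intro h k
    by_cases hhk : h = k
    · subst hhk
      rw [if_pos rfl, hXsq h, hVm]; ring
    · rw [if_neg hhk, ← hcA h k hhk]
      simp only [cov]
      rw [hXm h, hXm k]; ring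
  -- integrals of the sums
  have hintLX : ∀ h, Integrable (fun ω => lam h ω * X h ω) P :=
    fun h => memLp_mul_integrable (hlam h) (hX h)
  have hintLX' : ∀ h, Integrable (fun ω => lam' h ω * X h ω) P :=
    fun h => memLp_mul_integrable (hlam' h) (hX h)
  have hES : (∫ ω, (∑ h, lam h ω * X h ω) ∂P) = H * (ψ * m) := by
    rw [integral_finset_sum _ (fun h _ => hintLX h)]
    have hterm : ∀ h : Fin H, (∫ ω, lam h ω * X h ω ∂P) = ψ * m := fun h => by
      rw [hsplitInt (I0 h) (hlamint h) (hXint h), hmean h, hXm h]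
    simp [hterm, Finset.sum_const, Finset.card_univ, Fintype.card_fin, nsmul_eq_mul]
  have hES' : (∫ ω, (∑ h, lam' h ω * X h ω) ∂P) = H * (ψ * m) := by
    rw [integral_finset_sum _ (fun h _ => hintLX' h)]
    have hterm : ∀ h : Fin H, (∫ ω, lam' h ω * X h ω ∂P) = ψ * m := fun h => by
      rw [hsplitInt (I0' h) (hlamint' h) (hXint h), hmean' h, hXm h]
    simp [hterm, Finset.sum_const, Finset.card_univ, Fintype.card_fin, nsmul_eq_mul]
  -- generic second-moment computation for products of the two sums
  have hprod : ∀ (μ : Fin H → Ω → ℝ) (ν : Fin H → Ω → ℝ),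
      (∀ h, Integrable (μ h) P) → (∀ h, Integrable (ν h) P) →
      (∀ h k, Integrable (fun ω => μ h ω * ν k ω) P) →
      (∀ h k, IndepFun (fun ω => μ h ω * ν k ω) (fun ω => X h ω * X k ω) P) →
      (∫ ω, (∑ h, μ h ω * X h ω) * (∑ k, ν k ω * X k ω) ∂P) =
        ∑ h : Fin H, ∑ k : Fin H,
          (∫ ω, μ h ω * ν k ω ∂P) * ((if h = k then V else cA) + m * m) := by
    intro μ ν hμ hν hμν hI
    have hterm : ∀ (h k : Fin H),
        Integrable (fun ω => (μ h ω * ν k ω) * (X h ω * X k ω)) P :=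
      fun h k => by
        have := (hI h k).integrable_mul (hμν h k) (hXX h k)
        exact this
    have hre : ∀ ω, (∑ h, μ h ω * X h ω) * (∑ k, ν k ω * X k ω) =
        ∑ h : Fin H, ∑ k : Fin H, (μ h ω * ν k ω) * (X h ω * X k ω) := by
      intro ω
      rw [Finset.sum_mul_sum]
      exact Finset.sum_congr rfl fun h _ => Finset.sum_congr rfl fun k _ => by ring
    simp_rw [hre]
    rw [integral_finset_sum _ (fun h _ => integrable_finset_sum _ (fun k _ => hterm h k))]
    refine Finset.sum_congr rfl fun h _ => ?_
    rw [integral_finset_sum _ (fun k _ => hterm h k)]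
    refine Finset.sum_congr rfl fun k _ => ?_
    rw [hsplitInt (hI h k) (hμν h k) (hXX h k), hFX h k]
  have hSS' : (∫ ω, (∑ h, lam h ω * X h ω) * (∑ k, lam' k ω * X k ω) ∂P) =
      H * (ψ * ψ * (V + m * m)) + H * (H - 1) * (ψ * ψ * (cA + m * m)) := by
    rw [hprod lam lam' hlamint hlamint' (fun h k => memLp_mul_integrable (hlam h) (hlam' k)) I2]
    have : ∀ h k : Fin H, (∫ ω, lam h ω * lam' k ω ∂P) * ((if h = k then V else cA) + m * m) =
        if h = k then ψ * ψ * (V + m * m) else ψ * ψ * (cA + m * m) := by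
      intro h k; rw [hLL' h k]; split <;> ring
    simp_rw [this, double_sum_ite]
  have hSS : (∫ ω, (∑ h, lam h ω * X h ω) * (∑ k, lam k ω * X k ω) ∂P) =
      H * (ψ * (ψ + 1) * (V + m * m)) + H * (H - 1) * (ψ * ψ * (cA + m * m)) := by
    rw [hprod lam lam hlamint hlamint (fun h k => memLp_mul_integrable (hlam h) (hlam k)) I1]
    have : ∀ h k : Fin H, (∫ ω, lam h ω * lam k ω ∂P) * ((if h = k then V else cA) + m * m) =
        if h = k then ψ * (ψ + 1) * (V + m * m) else ψ * ψ * (cA + m * m) := by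
      intro h k; rw [hLL h k]; split <;> ring
    simp_rw [this, double_sum_ite]
  have hS'S' : (∫ ω, (∑ h, lam' h ω * X h ω) * (∑ k, lam' k ω * X k ω) ∂P) =
      H * (ψ * (ψ + 1) * (V + m * m)) + H * (H - 1) * (ψ * ψ * (cA + m * m)) := by
    rw [hprod lam' lam' hlamint' hlamint' (fun h k => memLp_mul_integrable (hlam' h) (hlam' k)) I3]
    have : ∀ h k : Fin H, (∫ ω, lam' h ω * lam' k ω ∂P) * ((if h = k then V else cA) + m * m) =
        if h = k then ψ * (ψ + 1) * (V + m * m) else ψ * ψ * (cA + m * m) := by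
      intro h k; rw [hL'L' h k]; split <;> ring
    simp_rw [this, double_sum_ite]
  -- covariances
  have hcov12 : cov P (fun ω => ∑ h, lam h ω * X h ω) (fun ω => ∑ h, lam' h ω * X h ω) =
      ψ * ψ * (H * D) := by
    simp only [cov]
    rw [hSS', hES, hES', hDdef]
    ring
  have hcov11 : cov P (fun ω => ∑ h, lam h ω * X h ω) (fun ω => ∑ h, lam h ω * X h ω) =
      ψ * ψ * (H * D) + ψ * (H * M2) := by
    simp only [cov]
    rw [hSS, hES, hDdef]
    linear_combination (H : ℝ) * ψ * hVm
  have hcov22 : cov P (fun ω => ∑ h, lam' h ω * X h ω) (fun ω => ∑ h, lam' h ω * X h ω) =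
      ψ * ψ * (H * D) + ψ * (H * M2) := by
    simp only [cov]
    rw [hS'S', hES', hDdef]
    linear_combination (H : ℝ) * ψ * hVm
  -- positivity and final algebra
  have hHpos : (0:ℝ) < H := by exact_mod_cast hH
  have hW : (0:ℝ) < ψ * ψ * (H * D) + ψ * (H * M2) := by positivity
  simp only [corr]
  rw [hcov12, hcov11, hcov22, Real.sqrt_mul_self hW.le]
  have hD0 : D ≠ 0 := ne_of_gt hpos
  have hψ0 : ψ ≠ 0 := ne_of_gt hψ
  have hH0 : (H:ℝ) ≠ 0 := ne_of_gt hHpos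
  field_simp
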